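/- Row Beissinger insertion computes the RS tableau of an involution: if z ∈ S_n is an involution and (a_1,b_1), …, (a_q,b_q) are the pairs (a,b) with 1 ≤ a ≤ b = z(a) ≤ n ordered so that b_1 < b_2 < ⋯ < b_q, then ∅ ←rBS (a_1,b_1) ←rBS ⋯ ←rBS (a_q,b_q) equals P_RS(z) = Q_RS(z). -/

import Mathlib

namespace GelfandRSK

/-- Schensted insertion of `x` into a single row: replace the first entry greater than `x`,
returning the new row and the bumped entry (if any). -/
def insertRow (r : List ℕ) (x : ℕ) : List ℕ × Option ℕ :=
  match r.findIdx? (fun y => decide (x < y)) with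
  | none => (r ++ [x], none)
  | some i => (r.set i x, r[i]?)

/-- Schensted row insertion of `x` into a tableau (list of rows). -/
def rsInsert : List (List ℕ) → ℕ → List (List ℕ)
  | [], x => [[x]]
  | r :: rest, x =>
    match insertRow r x with
    | (r', none) => r' :: rest
    | (r', some y) => r' :: rsInsert rest y

/-- The (0-indexed) row in which Schensted insertion of `x` adds a new box. -/
def rsBumpRow : List (List ℕ) → ℕ → ℕ
  | [], _ => 0
  | r :: rest, x =>
    match insertRow r x with
    | (_, none) => 0
    | (_, some y) => rsBumpRow rest y + 1

/-- The (0-indexed) column in which Schensted insertion of `x` adds a new box. -/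
def rsBumpCol (T : List (List ℕ)) (x : ℕ) : ℕ := (T.getD (rsBumpRow T x) []).length

/-- Add entry `k` at the end of (0-indexed) row `r`. -/
def addAtRow (T : List (List ℕ)) (r : ℕ) (k : ℕ) : List (List ℕ) :=
  if r < T.length then T.set r (T.getD r [] ++ [k]) else T ++ [[k]]

/-- Add entry `k` at the end of (0-indexed) column `c`. -/
def addAtCol (T : List (List ℕ)) (c : ℕ) (k : ℕ) : List (List ℕ) :=
  addAtRow T (T.findIdx (fun r => decide (r.length ≤ c))) k

/-- The Robinson--Schensted insertion tableau of a word. -/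
def PRS (w : List ℕ) : List (List ℕ) := w.foldl rsInsert []

/-- The Robinson--Schensted pair (insertion tableau, recording tableau) of a word. -/
def RSpair (w : List ℕ) : List (List ℕ) × List (List ℕ) :=
  (w.zipIdx.map Prod.swap).foldl (fun pq ix =>
    (rsInsert pq.1 ix.2, addAtRow pq.2 (rsBumpRow pq.1 ix.2) (ix.1 + 1))) ([], [])

/-- The Robinson--Schensted recording tableau of a word. -/
def QRS (w : List ℕ) : List (List ℕ) := (RSpair w).2

/-- The row reading word: read rows left to right, starting with the last row. -/
def rowWord (T : List (List ℕ)) : List ℕ := T.reverse.flatten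

/-- The shape of a tableau: the list of its row lengths. -/
def shape (T : List (List ℕ)) : List ℕ := T.map List.length

/-- Columns of the tableau are strictly increasing downwards. -/
def colStrict (T : List (List ℕ)) : Prop :=
  ∀ i c, i + 1 < T.length → c < (T.getD (i+1) []).length →
    (T.getD i []).getD c 0 < (T.getD (i+1) []).getD c 0

/-- A partially standard tableau: semistandard, of partition shape, with
distinct positive entries (hence rows and columns strictly increasing). -/
def PartiallyStandard (T : List (List ℕ)) : Prop :=
  (∀ r ∈ T, r ≠ []) ∧
  T.Chain' (fun r₁ r₂ => r₂.length ≤ r₁.length) ∧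
  (∀ r ∈ T, r.Chain' (· < ·)) ∧
  colStrict T ∧
  T.flatten.Nodup ∧
  (∀ x ∈ T.flatten, 0 < x)

/-- A standard tableau with `n` boxes: partially standard with entries exactly `1, …, n`. -/
def IsStandardTab (n : ℕ) (T : List (List ℕ)) : Prop :=
  PartiallyStandard T ∧ T.flatten.Perm (List.range' 1 n)

/-- Row Beissinger insertion of a pair `(a, b)` with `a ≤ b`. -/
def rBS (T : List (List ℕ)) (a b : ℕ) : List (List ℕ) :=
  if a = b then addAtRow T 0 a
  else addAtRow (rsInsert T a) (rsBumpRow T a + 1) b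

/-- Column Beissinger insertion of a pair `(a, b)` with `a ≤ b`. -/
def cBS (T : List (List ℕ)) (a b : ℕ) : List (List ℕ) :=
  if a = b then addAtCol T 0 a
  else addAtCol (rsInsert T a) (rsBumpCol T a + 1) b

/-- The function on 0-based indices underlying a permutation of `Fin n`
(identity outside `[0, n)`). -/
def permFn {n : ℕ} (z : Equiv.Perm (Fin n)) : ℕ → ℕ :=
  fun i => if h : i < n then (z ⟨i, h⟩ : ℕ) else i

/-- The one-line word (with 1-based values) of a function on `[0, m)`. -/
def wordFn (w : ℕ → ℕ) (m : ℕ) : List ℕ := (List.range m).map (fun i => w i + 1)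

/-- The one-line word (with 1-based values) of a permutation in `S_n`. -/
def wordOf {n : ℕ} (z : Equiv.Perm (Fin n)) : List ℕ := wordFn (permFn z) n

/-- The 1-based action of a permutation: `act y j = y(j)` in 1-based notation. -/
def act {n : ℕ} (y : Equiv.Perm (Fin n)) (j : ℕ) : ℕ := permFn y (j - 1) + 1

/-- The 1-based pairs `(a, b)` with `a ≤ b = z(a)` of an involution,
listed in increasing order of `b`. -/
def invPairsFn (w : ℕ → ℕ) (m : ℕ) : List (ℕ × ℕ) :=
  ((List.range m).filter (fun b => decide (w b ≤ b))).map (fun b => (w b + 1, b + 1))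

/-- Row Beissinger correspondence applied to an involution given as a function on `[0, m)`. -/
def PrBSfn (w : ℕ → ℕ) (m : ℕ) : List (List ℕ) :=
  (invPairsFn w m).foldl (fun T p => rBS T p.1 p.2) []

/-- Column Beissinger correspondence applied to an involution given as a function on `[0, m)`. -/
def PcBSfn (w : ℕ → ℕ) (m : ℕ) : List (List ℕ) :=
  (invPairsFn w m).foldl (fun T p => cBS T p.1 p.2) []

/-- The row Beissinger tableau of an involution in `S_n`. -/
def PrBS {n : ℕ} (z : Equiv.Perm (Fin n)) : List (List ℕ) := PrBSfn (permFn z) n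

/-- The column Beissinger tableau of an involution in `S_n`. -/
def PcBS {n : ℕ} (z : Equiv.Perm (Fin n)) : List (List ℕ) := PcBSfn (permFn z) n

/-- The transpose of a tableau. -/
def transposeT (T : List (List ℕ)) : List (List ℕ) :=
  (List.range (T.headD []).length).map (fun c => T.filterMap (fun r => r[c]?))

/-- The length of (0-indexed) column `c`. -/
def colLen (T : List (List ℕ)) (c : ℕ) : ℕ := (T.filter (fun r => decide (c < r.length))).length

/-- The number of columns of odd length. -/
def oddColCount (T : List (List ℕ)) : ℕ :=
  ((List.range (T.headD []).length).filter (fun c => decide (colLen T c % 2 = 1))).length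

/-- The number of rows of odd length. -/
def oddRowCount (T : List (List ℕ)) : ℕ :=
  (T.filter (fun r => decide (r.length % 2 = 1))).length

/-- Apply a function to every entry of a tableau. -/
def applyEntries (f : ℕ → ℕ) (T : List (List ℕ)) : List (List ℕ) := T.map (List.map f)

/-- The transposition of values `j` and `j+1`. -/
def swapVals (j : ℕ) : ℕ → ℕ := fun x => if x = j then j + 1 else if x = j + 1 then j else x

/-- The elementary dual equivalence operator `D_i` acting on a tableau
containing the entries `i-1`, `i`, `i+1`, defined via the row reading word. -/
def Dop (i : ℕ) (T : List (List ℕ)) : List (List ℕ) :=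
  let w := rowWord T
  let p : ℕ → ℕ := fun v => w.idxOf v
  if (p i < p (i+1) ∧ p (i+1) < p (i-1)) ∨ (p (i-1) < p (i+1) ∧ p (i+1) < p i) then
    applyEntries (swapVals (i-1)) T
  else if (p i < p (i-1) ∧ p (i-1) < p (i+1)) ∨ (p (i+1) < p (i-1) ∧ p (i-1) < p i) then
    applyEntries (swapVals i) T
  else T

/-- `x` lies strictly between `u` and `v`. -/
def Btwn {α : Type*} [LT α] (x u v : α) : Prop := (u < x ∧ x < v) ∨ (v < x ∧ x < u)

/-- Exchange the entries at 0-based positions `p` and `q` of a word. -/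
def swapPos (u : List ℕ) (p q : ℕ) : List ℕ := (u.set p (u.getD q 0)).set q (u.getD p 0)

/-- The Knuth move relation at 1-based position `i` on words: either the word is
unchanged and the letters at positions `i-1, i, i+1` are monotone, or the letters at
positions `i-1, i` are exchanged (when the letter at position `i+1` is between them),
or the letters at positions `i, i+1` are exchanged (when the letter at position `i-1`
is between them). -/
def KnuthRelW (i : ℕ) (u v : List ℕ) : Prop :=
  (v = u ∧ ((u.getD (i-2) 0 < u.getD (i-1) 0 ∧ u.getD (i-1) 0 < u.getD i 0) ∨
            (u.getD i 0 < u.getD (i-1) 0 ∧ u.getD (i-1) 0 < u.getD (i-2) 0))) ∨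
  (Btwn (u.getD i 0) (u.getD (i-2) 0) (u.getD (i-1) 0) ∧ v = swapPos u (i-2) (i-1)) ∨
  (Btwn (u.getD (i-2) 0) (u.getD (i-1) 0) (u.getD i 0) ∧ v = swapPos u (i-1) i)

/-- The Knuth move relation at position `i` on permutations. -/
def KnuthRel {n : ℕ} (i : ℕ) (v w : Equiv.Perm (Fin n)) : Prop :=
  KnuthRelW i (wordOf v) (wordOf w)

/-- The dual Knuth move relation at position `i` on permutations. -/
def DualKnuthRel {n : ℕ} (i : ℕ) (v w : Equiv.Perm (Fin n)) : Prop :=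
  KnuthRelW i (wordOf v⁻¹) (wordOf w⁻¹)

/-- Knuth equivalence of permutations. -/
def KnuthEquiv {n : ℕ} (v w : Equiv.Perm (Fin n)) : Prop :=
  Relation.ReflTransGen (fun a b => ∃ i, 1 < i ∧ i < n ∧ KnuthRel i a b) v w

/-- Dual Knuth equivalence of permutations. -/
def DualKnuthEquiv {n : ℕ} (v w : Equiv.Perm (Fin n)) : Prop :=
  Relation.ReflTransGen (fun a b => ∃ i, 1 < i ∧ i < n ∧ DualKnuthRel i a b) v w

/-- The 0-based fixed points of a permutation, in increasing order. -/
def fixList {n : ℕ} (z : Equiv.Perm (Fin n)) : List ℕ :=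
  ((List.finRange n).filter (fun c => decide (z c = c))).map Fin.val

/-- The ascending embedding `ι_asc` of involutions of `[n]` into fixed-point-free
involutions of `[2n]`, as a function on 0-based indices. -/
def iotaAsc {n : ℕ} (z : Equiv.Perm (Fin n)) : ℕ → ℕ := fun i =>
  let F := fixList z
  if h : i < n then
    if z ⟨i, h⟩ = ⟨i, h⟩ then n + F.idxOf i else (z ⟨i, h⟩ : ℕ)
  else if i < n + F.length then F.getD (i - n) 0
  else if i % 2 = 0 then i + 1 else i - 1

/-- The descending embedding `ι_des` of involutions of `[n]` into fixed-point-free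
involutions of `[2n]`, as a function on 0-based indices. -/
def iotaDes {n : ℕ} (z : Equiv.Perm (Fin n)) : ℕ → ℕ := fun i =>
  let F := fixList z
  if h : i < n then
    if z ⟨i, h⟩ = ⟨i, h⟩ then n + F.length - 1 - F.idxOf i else (z ⟨i, h⟩ : ℕ)
  else if i < n + F.length then F.getD (n + F.length - 1 - i) 0
  else if i % 2 = 0 then i + 1 else i - 1

/-- The number of inversions of a function on `[0, m)`. -/
def lenFn (w : ℕ → ℕ) (m : ℕ) : ℕ :=
  ((Finset.range m ×ˢ Finset.range m).filter (fun p => p.1 < p.2 ∧ w p.2 < w p.1)).card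

/-- Weak descents (0-based indices `i` with `0 ≤ i < n-1`). -/
def wDesEq (w : ℕ → ℕ) (n : ℕ) : Finset ℕ :=
  (Finset.range (n-1)).filter (fun i => w i = i + 1 ∧ w (i+1) = i)

/-- Weak ascents. -/
def wAscEq (w : ℕ → ℕ) (n : ℕ) : Finset ℕ :=
  (Finset.range (n-1)).filter (fun i => n ≤ w i ∧ n ≤ w (i+1))

/-- Strict descents. -/
def wDesLt (w : ℕ → ℕ) (n : ℕ) : Finset ℕ :=
  ((Finset.range (n-1)).filter (fun i => w (i+1) < w i)) \ (wAscEq w n ∪ wDesEq w n)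

/-- Strict ascents. -/
def wAscLt (w : ℕ → ℕ) (n : ℕ) : Finset ℕ :=
  ((Finset.range (n-1)).filter (fun i => w i < w (i+1))) \ wAscEq w n

/-- Delete all boxes of `T` whose entry exceeds `n`. -/
def restrictT (T : List (List ℕ)) (n : ℕ) : List (List ℕ) :=
  (T.map (fun r => r.filter (fun x => decide (x ≤ n)))).filter (fun r => !r.isEmpty)

/-- The 0-based indices of the odd columns of `T`, in increasing order. -/
def oddColsList (T : List (List ℕ)) : List ℕ :=
  (List.range (T.headD []).length).filter (fun c => decide (colLen T c % 2 = 1))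

/-- Given a standard tableau `T` with `n` boxes and `k` odd columns, place
`n+1, …, n+k` at the bottoms of the odd columns from left to right, then add
`n+k+1, n+k+3, …, 2n-1` to the first row and `n+k+2, n+k+4, …, 2n` to the second row. -/
def iotaRow (n : ℕ) (T : List (List ℕ)) : List (List ℕ) :=
  let cols := oddColsList T
  let k := cols.length
  let T1 := (cols.zipIdx.map Prod.swap).foldl (fun S ci => addAtCol S ci.2 (n + 1 + ci.1)) T
  let T2 := (List.range ((n - k) / 2)).foldl (fun S m => addAtRow S 0 (n + k + 1 + 2*m)) T1
  (List.range ((n - k) / 2)).foldl (fun S m => addAtRow S 1 (n + k + 2 + 2*m)) T2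

/-- The number of transfer points: 0-based `i < n` with `w i ≥ n` (1-based `w(i) > n`). -/
def transferCount (w : ℕ → ℕ) (n : ℕ) : ℕ :=
  ((List.range n).filter (fun i => decide (n ≤ w i))).length

/-- `G^asc_n`: the image of the ascending embedding. -/
def GAsc (n : ℕ) : Set (ℕ → ℕ) := {f | ∃ w : Equiv.Perm (Fin n), w * w = 1 ∧ f = iotaAsc w}

/-- `G^des_n`: the image of the descending embedding. -/
def GDes (n : ℕ) : Set (ℕ → ℕ) := {f | ∃ w : Equiv.Perm (Fin n), w * w = 1 ∧ f = iotaDes w}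

/-- The value `e(j)` from the statement of Theorem on column Beissinger dual
equivalence: for 1-based `j`, `e(j) = -j` if `y(j) = j`; `e(j) = j` if
`j ≠ y(j) ∈ {i-1, i, i+1}`; and `e(j) = y(j)` otherwise. -/
def eVal {n : ℕ} (y : Equiv.Perm (Fin n)) (i j : ℕ) : ℤ :=
  if act y j = j then -(j : ℤ)
  else if act y j ∈ ({i-1, i, i+1} : Finset ℕ) then (j : ℤ)
  else (act y j : ℤ)

/-- Schensted column insertion, via the transpose. -/
def colInsertT (T : List (List ℕ)) (x : ℕ) : List (List ℕ) :=
  transposeT (rsInsert (transposeT T) x)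

/-- The (0-indexed) row in which Schensted column insertion of `x` adds a box. -/
def colBumpRow (T : List (List ℕ)) (x : ℕ) : ℕ := rsBumpCol (transposeT T) x

/-- The alternative column Beissinger insertion `T ⇐cBS (a,b)`: if `a = b`, add `a`
at the end of the first row; if `a < b`, column insert `a` (adding a box in row `i`)
and add `b` at the end of row `i+1`. -/
def cBSalt (T : List (List ℕ)) (a b : ℕ) : List (List ℕ) :=
  if a = b then addAtRow T 0 a
  else addAtRow (colInsertT T a) (colBumpRow T a + 1) b

/-!
Induct on a partial involution `f`, removing its largest label `c`. If `f c = c`, then `c` is the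
largest letter, and reading it appends `c` to the first row of both tableaux, exactly as
`T ←rBS (c, c)` does. Otherwise `a = f c < c`, and the letter `c`, read at time `a`, exceeds every
other letter, so later insertions only push it down one row at a time. Hence, if `(P, Q)` is the
RS pair of the word with both letters of the arc `(a, c)` removed, reading `c` at time `a` turns it
into `(P', Q ← a)`, where `P'` is `P` with `c` appended to the row in which `Q ← a` stops. By
induction `P = Q`, so the letter `a`, read last at time `c`, follows the same bumping path in `P`,
pushes `c` into the next row, and both tableaux become `P ←rBS (a, c)`.
-/

abbrev Tab := List (List ℕ)

theorem insertRow_cons (a x : ℕ) (l : List ℕ) :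
    insertRow (a :: l) x = if x < a then (x :: l, some a)
      else ((insertRow l x).1.cons a, (insertRow l x).2) := by
  unfold insertRow
  rw [List.findIdx?_cons]
  by_cases h : x < a
  · simp [h]
  · cases l.findIdx? (fun y => decide (x < y)) <;> simp [h]

theorem insertRow_of_forall_le {r : List ℕ} {x : ℕ} (h : ∀ v ∈ r, v ≤ x) :
    insertRow r x = (r ++ [x], none) := by
  induction r with
  | nil => rfl
  | cons a l ih =>
    rw [insertRow_cons, if_neg (by simpa using h a (by simp)),
      ih fun v hv => h v (by simp [hv])]
    simp

theorem insertRow_fst_of_snd_eq_none {r : List ℕ} {x : ℕ} (h : (insertRow r x).2 = none) :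
    (insertRow r x).1 = r ++ [x] := by
  induction r with
  | nil => rfl
  | cons a l ih =>
    rw [insertRow_cons] at h ⊢
    by_cases hx : x < a
    · simp [hx] at h
    · simp [hx] at h ⊢
      exact ih h

theorem mem_of_mem_insertRow_fst {r : List ℕ} {x v : ℕ} (h : v ∈ (insertRow r x).1) :
    v ∈ r ∨ v = x := by
  induction r with
  | nil => simpa [insertRow] using h
  | cons a l ih =>
    rw [insertRow_cons] at h
    split_ifs at h
    · simp only [List.mem_cons] at h ⊢; tauto
    · simp only [List.mem_cons] at h ⊢
      rcases h with h | h
      · exact Or.inl (Or.inl h)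
      · rcases ih h with h | h <;> tauto

theorem mem_of_insertRow_snd_eq_some {r : List ℕ} {x y : ℕ} (h : (insertRow r x).2 = some y) :
    y ∈ r := by
  induction r with
  | nil => simp [insertRow] at h
  | cons a l ih =>
    rw [insertRow_cons] at h
    split_ifs at h
    · simp_all
    · simp [ih h]

theorem insertRow_append_singleton_of_snd_eq_some {r : List ℕ} {x y b : ℕ}
    (h : (insertRow r x).2 = some y) :
    insertRow (r ++ [b]) x = ((insertRow r x).1 ++ [b], some y) := by
  induction r with
  | nil => simp [insertRow] at h
  | cons a l ih =>
    rw [insertRow_cons] at h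
    rw [List.cons_append, insertRow_cons, insertRow_cons]
    split_ifs at h ⊢ with hx
    · simp_all
    · simp [ih h]

theorem insertRow_append_singleton_of_snd_eq_none {r : List ℕ} {x b : ℕ} (hx : x < b)
    (h : (insertRow r x).2 = none) :
    insertRow (r ++ [b]) x = (r ++ [x], some b) := by
  induction r with
  | nil => simp [insertRow_cons, hx]
  | cons a l ih =>
    rw [insertRow_cons] at h
    rw [List.cons_append, insertRow_cons]
    by_cases hxa : x < a
    · simp [hxa] at h
    · simp [hxa] at h ⊢
      simp [ih h]

theorem addAtRow_zero (T : Tab) (k : ℕ) : addAtRow T 0 k = (T.getD 0 [] ++ [k]) :: T.tail := by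
  cases T <;> simp [addAtRow]

theorem addAtRow_cons_succ (row : List ℕ) (rest : Tab) (m k : ℕ) :
    addAtRow (row :: rest) (m + 1) k = row :: addAtRow rest m k := by
  unfold addAtRow
  by_cases h : m < rest.length
  · rw [if_pos (by simpa using h), if_pos h]; simp
  · rw [if_neg (by simpa using h), if_neg h]; simp

theorem length_addAtRow (T : Tab) (r k : ℕ) :
    (addAtRow T r k).length = if r < T.length then T.length else T.length + 1 := by
  unfold addAtRow
  split_ifs <;> simp

theorem mem_flatten_addAtRow {T : Tab} {r k v : ℕ} (h : v ∈ (addAtRow T r k).flatten) :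
    v ∈ T.flatten ∨ v = k := by
  unfold addAtRow at h
  split_ifs at h with hr
  · obtain ⟨row, hrow, hv⟩ := List.mem_flatten.1 h
    rcases List.mem_or_eq_of_mem_set hrow with hrow | rfl
    · exact Or.inl (List.mem_flatten.2 ⟨row, hrow, hv⟩)
    · rcases List.mem_append.1 hv with hv | hv
      · rw [List.getD_eq_getElem _ _ hr] at hv
        exact Or.inl (List.mem_flatten.2 ⟨_, List.getElem_mem hr, hv⟩)
      · exact Or.inr (List.mem_singleton.1 hv)
  · simpa using h

theorem rsInsert_cons (r : List ℕ) (rest : Tab) (x : ℕ) :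
    rsInsert (r :: rest) x =
      (insertRow r x).1 :: (insertRow r x).2.elim rest (rsInsert rest) := by
  rw [rsInsert]
  rcases insertRow r x with ⟨r', _ | _⟩ <;> rfl

theorem rsBumpRow_cons (r : List ℕ) (rest : Tab) (x : ℕ) :
    rsBumpRow (r :: rest) x = (insertRow r x).2.elim 0 (fun y => rsBumpRow rest y + 1) := by
  rw [rsBumpRow]
  rcases insertRow r x with ⟨r', _ | _⟩ <;> rfl

theorem rsBumpRow_le_length (T : Tab) (x : ℕ) : rsBumpRow T x ≤ T.length := by
  induction T generalizing x with
  | nil => simp [rsBumpRow]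
  | cons r rest ih =>
    rw [rsBumpRow_cons]
    cases (insertRow r x).2 with
    | none => simp
    | some y => simpa using ih y

theorem length_rsInsert (T : Tab) (x : ℕ) :
    (rsInsert T x).length = if rsBumpRow T x < T.length then T.length else T.length + 1 := by
  induction T generalizing x with
  | nil => simp [rsInsert, rsBumpRow]
  | cons r rest ih =>
    rw [rsInsert_cons, rsBumpRow_cons]
    cases (insertRow r x).2 with
    | none => simp
    | some y =>
      simp only [Option.elim, List.length_cons, ih y]
      by_cases h : rsBumpRow rest y < rest.length <;> simp [h]

theorem mem_flatten_rsInsert {T : Tab} {x v : ℕ} (h : v ∈ (rsInsert T x).flatten) :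
    v ∈ T.flatten ∨ v = x := by
  induction T generalizing x with
  | nil => simpa [rsInsert] using h
  | cons r rest ih =>
    rw [rsInsert_cons, List.flatten_cons, List.mem_append] at h
    rcases h with h | h
    · rcases mem_of_mem_insertRow_fst h with h | h
      · exact Or.inl (by simp [h])
      · exact Or.inr h
    · cases hy : (insertRow r x).2 with
      | none => rw [hy, Option.elim] at h; exact Or.inl (List.mem_append_right r h)
      | some y =>
        rw [hy] at h
        rcases ih h with h | rfl
        · exact Or.inl (by simp [h])
        · exact Or.inl (by simp [mem_of_insertRow_snd_eq_some hy])

theorem rsInsert_of_forall_le {T : Tab} {x : ℕ} (h : ∀ v ∈ T.flatten, v ≤ x) :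
    rsInsert T x = addAtRow T 0 x ∧ rsBumpRow T x = 0 := by
  cases T with
  | nil => simp [rsInsert, rsBumpRow, addAtRow]
  | cons r rest =>
    rw [rsInsert_cons, rsBumpRow_cons, insertRow_of_forall_le fun v hv => h v (by simp [hv]),
      addAtRow_zero]
    simp

theorem rsInsert_addAtRow_of_rsBumpRow_ne {T : Tab} {x m b : ℕ} (hm : m ≤ T.length)
    (hne : rsBumpRow T x ≠ m) :
    rsInsert (addAtRow T m b) x = addAtRow (rsInsert T x) m b ∧
      rsBumpRow (addAtRow T m b) x = rsBumpRow T x := by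
  induction T generalizing x m with
  | nil => simp_all [rsBumpRow]
  | cons r rest ih =>
    rw [rsBumpRow_cons] at hne
    cases hy : (insertRow r x).2 with
    | none =>
      rw [hy] at hne
      obtain ⟨m, rfl⟩ := Nat.exists_eq_succ_of_ne_zero (Ne.symm hne)
      simp [addAtRow_cons_succ, rsInsert_cons, rsBumpRow_cons, hy]
    | some y =>
      cases m with
      | zero =>
        simp [addAtRow_zero, rsInsert_cons, rsBumpRow_cons,
          insertRow_append_singleton_of_snd_eq_some hy, hy]
      | succ m =>
        rw [hy] at hne
        obtain ⟨h₁, h₂⟩ := ih (x := y) (by simpa using hm) (by simpa using hne)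
        simp [addAtRow_cons_succ, rsInsert_cons, rsBumpRow_cons, hy, h₁, h₂]

theorem rsInsert_addAtRow_rsBumpRow {T : Tab} {x b : ℕ} (hT : ∀ v ∈ T.flatten, v < b)
    (hx : x < b) :
    rsInsert (addAtRow T (rsBumpRow T x) b) x = addAtRow (rsInsert T x) (rsBumpRow T x + 1) b ∧
      rsBumpRow (addAtRow T (rsBumpRow T x) b) x = rsBumpRow T x + 1 := by
  induction T generalizing x with
  | nil => simp [rsBumpRow, addAtRow, rsInsert, insertRow_cons, hx]
  | cons r rest ih =>
    cases hy : (insertRow r x).2 with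
    | none =>
      obtain ⟨h₁, h₂⟩ := rsInsert_of_forall_le (T := rest) (x := b)
        fun v hv => (hT v (by simp [hv])).le
      simp [addAtRow_zero, addAtRow_cons_succ, rsInsert_cons, rsBumpRow_cons, hy,
        insertRow_append_singleton_of_snd_eq_none hx hy, insertRow_fst_of_snd_eq_none hy, h₁, h₂]
    | some y =>
      have hy_mem := mem_of_insertRow_snd_eq_some hy
      obtain ⟨h₁, h₂⟩ := ih (x := y) (fun v hv => hT v (by simp [hv]))
        (hT y (by simp [hy_mem]))
      simp [addAtRow_cons_succ, rsInsert_cons, rsBumpRow_cons, hy, h₁, h₂]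

/-- One step of the RS correspondence, reading the letter `q.2` with label `q.1`. -/
def rsStep (s : Tab × Tab) (q : ℕ × ℕ) : Tab × Tab :=
  (rsInsert s.1 q.2, addAtRow s.2 (rsBumpRow s.1 q.2) q.1)

/-- The RS state `s` of a word, corrected for a letter `c` with label `a` that was left out of it,
when `c` is the largest letter: `a` is inserted into the recording tableau, and `c` sits at the end
of the row in which that insertion stops. -/
def addArc (a c : ℕ) (s : Tab × Tab) : Tab × Tab :=
  (addAtRow s.1 (rsBumpRow s.2 a) c, rsInsert s.2 a)

theorem length_rsStep {s : Tab × Tab} (h : s.1.length = s.2.length) (q : ℕ × ℕ) :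
    (rsStep s q).1.length = (rsStep s q).2.length := by
  simp only [rsStep, length_rsInsert, length_addAtRow, h]

theorem rsStep_eq_addArc {a c : ℕ} {s : Tab × Tab} (hs₁ : ∀ v ∈ s.1.flatten, v < c)
    (hs₂ : ∀ v ∈ s.2.flatten, v < a) :
    rsStep s (a, c) = addArc a c s := by
  obtain ⟨hP₁, hP₂⟩ := rsInsert_of_forall_le fun v hv => (hs₁ v hv).le
  obtain ⟨hQ₁, hQ₂⟩ := rsInsert_of_forall_le fun v hv => (hs₂ v hv).le
  simp only [rsStep, addArc, hP₁, hP₂, hQ₁, hQ₂]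

theorem rsStep_addArc {a c : ℕ} {s : Tab × Tab} {q : ℕ × ℕ} (hlen : s.1.length = s.2.length)
    (hs₁ : ∀ v ∈ s.1.flatten, v < c) (hq : q.2 < c) (hs₂ : ∀ v ∈ s.2.flatten, v < q.1)
    (ha : a < q.1) :
    rsStep (addArc a c s) q = addArc a c (rsStep s q) := by
  obtain ⟨P, Q⟩ := s
  obtain ⟨j, x⟩ := q
  simp only [rsStep, addArc] at *
  by_cases h : rsBumpRow P x = rsBumpRow Q a
  · obtain ⟨hP₁, hP₂⟩ := rsInsert_addAtRow_rsBumpRow hs₁ hq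
    obtain ⟨hQ₁, hQ₂⟩ := rsInsert_addAtRow_rsBumpRow hs₂ ha
    rw [← h, hP₁, hP₂, h, hQ₁, hQ₂]
  · obtain ⟨hP₁, hP₂⟩ := rsInsert_addAtRow_of_rsBumpRow_ne (b := c)
      (hlen ▸ rsBumpRow_le_length Q a) h
    obtain ⟨hQ₁, hQ₂⟩ := rsInsert_addAtRow_of_rsBumpRow_ne (b := j)
      (hlen ▸ rsBumpRow_le_length P x) (Ne.symm h)
    rw [hP₁, hP₂, hQ₁, hQ₂]

theorem rsStep_addArc_self {a c : ℕ} {T : Tab} (hT : ∀ v ∈ T.flatten, v < c) (hac : a < c) :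
    rsStep (addArc a c (T, T)) (c, a) = (rBS T a c, rBS T a c) := by
  obtain ⟨h₁, h₂⟩ := rsInsert_addAtRow_rsBumpRow hT hac
  simp only [rsStep, addArc, h₁, h₂, rBS, if_neg hac.ne]

theorem rsStep_self_of_forall_le {c : ℕ} {T : Tab} (hT : ∀ v ∈ T.flatten, v ≤ c) :
    rsStep (T, T) (c, c) = (rBS T c c, rBS T c c) := by
  obtain ⟨h₁, h₂⟩ := rsInsert_of_forall_le hT
  simp [rsStep, rBS, h₁, h₂]

theorem foldl_rsStep_fst (l : List (ℕ × ℕ)) (s : Tab × Tab) :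
    (l.foldl rsStep s).1 = (l.map Prod.snd).foldl rsInsert s.1 := by
  induction l generalizing s with
  | nil => rfl
  | cons q l ih => exact ih _

theorem forall_mem_foldl_rsStep_fst {p : ℕ → Prop} (l : List (ℕ × ℕ)) {s : Tab × Tab}
    (hs : ∀ v ∈ s.1.flatten, p v) (hl : ∀ q ∈ l, p q.2) :
    ∀ v ∈ (l.foldl rsStep s).1.flatten, p v := by
  induction l generalizing s with
  | nil => exact hs
  | cons q l ih =>
    refine ih (fun v hv => ?_) fun q' hq' => hl q' (by simp [hq'])
    rcases mem_flatten_rsInsert hv with hv | rfl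
    exacts [hs v hv, hl q (by simp)]

theorem forall_mem_foldl_rsStep_snd {p : ℕ → Prop} (l : List (ℕ × ℕ)) {s : Tab × Tab}
    (hs : ∀ v ∈ s.2.flatten, p v) (hl : ∀ q ∈ l, p q.1) :
    ∀ v ∈ (l.foldl rsStep s).2.flatten, p v := by
  induction l generalizing s with
  | nil => exact hs
  | cons q l ih =>
    refine ih (fun v hv => ?_) fun q' hq' => hl q' (by simp [hq'])
    rcases mem_flatten_addAtRow hv with hv | rfl
    exacts [hs v hv, hl q (by simp)]

theorem length_foldl_rsStep (l : List (ℕ × ℕ)) {s : Tab × Tab}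
    (h : s.1.length = s.2.length) :
    (l.foldl rsStep s).1.length = (l.foldl rsStep s).2.length := by
  induction l generalizing s with
  | nil => exact h
  | cons q l ih => exact ih (length_rsStep h q)

theorem foldl_rsStep_addArc {a c : ℕ} (l : List (ℕ × ℕ)) {s : Tab × Tab}
    (hl : l.Pairwise fun q q' => q.1 < q'.1) (hlen : s.1.length = s.2.length)
    (hs₁ : ∀ v ∈ s.1.flatten, v < c) (hs₂ : ∀ q ∈ l, ∀ v ∈ s.2.flatten, v < q.1)
    (hlt : ∀ q ∈ l, q.2 < c) (hgt : ∀ q ∈ l, a < q.1) :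
    l.foldl rsStep (addArc a c s) = addArc a c (l.foldl rsStep s) := by
  induction l generalizing s with
  | nil => rfl
  | cons q l ih =>
    obtain ⟨hq, hl⟩ := List.pairwise_cons.1 hl
    rw [List.foldl_cons, List.foldl_cons,
      rsStep_addArc hlen hs₁ (hlt q (by simp)) (hs₂ q (by simp)) (hgt q (by simp))]
    refine ih hl (length_rsStep hlen q) (fun v hv => ?_) (fun q' hq' v hv => ?_)
      (fun q' hq' => hlt q' (by simp [hq'])) (fun q' hq' => hgt q' (by simp [hq']))
    · rcases mem_flatten_rsInsert hv with hv | rfl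
      exacts [hs₁ v hv, hlt q (by simp)]
    · rcases mem_flatten_addAtRow hv with hv | rfl
      exacts [hs₂ q' (by simp [hq']) v hv, hq q' hq']

def InvolutiveOn (f : ℕ → ℕ) (ls : List ℕ) : Prop := ∀ i ∈ ls, f i ∈ ls ∧ f (f i) = i

theorem InvolutiveOn.of_mem_iff {f : ℕ → ℕ} {l l' : List ℕ} {a c : ℕ}
    (hf : InvolutiveOn f l) (hl : ∀ i, i ∈ l ↔ i ∈ l' ∨ i = a ∨ i = c) (ha : a ∉ l')
    (hc : c ∉ l') (hfa : f a = c) :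
    InvolutiveOn f l' := by
  have hfc : f c = a := by rw [← hfa, (hf a ((hl a).2 (by simp))).2]
  intro i hi
  obtain ⟨hfi, hffi⟩ := hf i ((hl i).2 (Or.inl hi))
  refine ⟨((hl _).1 hfi).resolve_right ?_, hffi⟩
  rintro (h | h)
  · exact hc (by rwa [← hffi, h, hfa] at hi)
  · exact ha (by rwa [← hffi, h, hfc] at hi)

theorem InvolutiveOn.of_append_singleton {f : ℕ → ℕ} {L : List ℕ} {c : ℕ}
    (hs : (L ++ [c]).Pairwise (· < ·)) (hf : InvolutiveOn f (L ++ [c])) (hfc : f c = c) :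
    InvolutiveOn f L := by
  have hc : c ∉ L := fun h => (List.pairwise_append.1 hs).2.2 c h c (by simp) |>.false
  exact hf.of_mem_iff (by simp) hc hc hfc

theorem InvolutiveOn.of_append_cons_append {f : ℕ → ℕ} {l₀ l₂ : List ℕ} {a c : ℕ}
    (hs : (l₀ ++ a :: l₂ ++ [c]).Pairwise (· < ·)) (hf : InvolutiveOn f (l₀ ++ a :: l₂ ++ [c]))
    (hfc : f c = a) :
    InvolutiveOn f (l₀ ++ l₂) := by
  obtain ⟨hL, -, hLc⟩ := List.pairwise_append.1 hs
  obtain ⟨-, hal₂, h₀⟩ := List.pairwise_append.1 hL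
  have h₂ := (List.pairwise_cons.1 hal₂).1
  have hfa : f a = c := by rw [← hfc, (hf c (by simp)).2]
  refine hf.of_mem_iff (by simp; tauto) ?_ ?_ hfa <;> simp only [List.mem_append, not_or]
  · exact ⟨fun h => (h₀ a h a (by simp)).false, fun h => (h₂ a h).false⟩
  · exact ⟨fun h => (hLc c (by simp [h]) c (by simp)).false,
      fun h => (hLc c (by simp [h]) c (by simp)).false⟩

def rsPair (f : ℕ → ℕ) (ls : List ℕ) : Tab × Tab :=
  (ls.map fun i => (i, f i)).foldl rsStep ([], [])

def rbsTableau (f : ℕ → ℕ) (ls : List ℕ) : Tab :=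
  ((ls.filter fun b => f b ≤ b).map fun b => (f b, b)).foldl (fun T p => rBS T p.1 p.2) []

theorem rsPair_append_singleton (f : ℕ → ℕ) (ls : List ℕ) (c : ℕ) :
    rsPair f (ls ++ [c]) = rsStep (rsPair f ls) (c, f c) := by
  simp [rsPair]

theorem forall_mem_rsPair_fst {p : ℕ → Prop} {f : ℕ → ℕ} {ls : List ℕ}
    (h : ∀ i ∈ ls, p (f i)) :
    ∀ v ∈ (rsPair f ls).1.flatten, p v :=
  forall_mem_foldl_rsStep_fst _ (by simp) (by simpa using h)

theorem forall_mem_rsPair_snd {p : ℕ → Prop} {f : ℕ → ℕ} {ls : List ℕ} (h : ∀ i ∈ ls, p i) :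
    ∀ v ∈ (rsPair f ls).2.flatten, p v :=
  forall_mem_foldl_rsStep_snd _ (by simp) (by simpa using h)

theorem rbsTableau_append_singleton {f : ℕ → ℕ} (ls : List ℕ) {c : ℕ} (hc : f c ≤ c) :
    rbsTableau f (ls ++ [c]) = rBS (rbsTableau f ls) (f c) c := by
  simp [rbsTableau, hc]

theorem rbsTableau_append_cons_of_lt {f : ℕ → ℕ} (l₀ l₂ : List ℕ) {a : ℕ} (ha : a < f a) :
    rbsTableau f (l₀ ++ a :: l₂) = rbsTableau f (l₀ ++ l₂) := by
  simp [rbsTableau, ha.not_ge]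

theorem rsPair_append_arc {f : ℕ → ℕ} {l₀ l₂ : List ℕ} {a c : ℕ} (hfa : f a = c)
    (hfc : f c = a) (hs : (l₀ ++ a :: l₂).Pairwise (· < ·)) (hlt : ∀ i ∈ l₀ ++ l₂, f i < c) :
    rsPair f (l₀ ++ a :: l₂ ++ [c]) = rsStep (addArc a c (rsPair f (l₀ ++ l₂))) (c, a) := by
  obtain ⟨-, hal₂, h₀⟩ := List.pairwise_append.1 hs
  obtain ⟨ha₂, h₂⟩ := List.pairwise_cons.1 hal₂
  have hs₁ := forall_mem_rsPair_fst (p := (· < c)) fun i hi =>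
    hlt i (List.mem_append_left l₂ hi)
  have hs₂ := forall_mem_rsPair_snd (p := (· < a)) (f := f) fun i hi => h₀ i hi a (by simp)
  rw [rsPair_append_singleton, hfc]
  congr 1
  simp only [rsPair, List.map_append, List.map_cons, List.foldl_append, List.foldl_cons,
    hfa] at hs₁ hs₂ ⊢
  rw [rsStep_eq_addArc hs₁ hs₂, foldl_rsStep_addArc _ (List.pairwise_map.2 h₂)
    (length_foldl_rsStep _ rfl) hs₁
    (by simpa using fun i hi v hv => (hs₂ v hv).trans (ha₂ i hi))
    (by simpa using fun i hi => hlt i (List.mem_append_right l₀ hi)) (by simpa using ha₂)]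

theorem rsPair_eq_rbsTableau {f : ℕ → ℕ} {ls : List ℕ} (hs : ls.Pairwise (· < ·))
    (hf : InvolutiveOn f ls) :
    rsPair f ls = (rbsTableau f ls, rbsTableau f ls) := by
  induction h : ls.length using Nat.strong_induction_on generalizing ls with
  | _ n ih =>
  rcases ls.eq_nil_or_concat' with rfl | ⟨L, c, rfl⟩
  · rfl
  subst h
  have hLc : ∀ i ∈ L, i < c := fun i hi => (List.pairwise_append.1 hs).2.2 i hi c (by simp)
  obtain ⟨hfc, hffc⟩ := hf c (by simp)
  rcases List.mem_append.1 hfc with ha | hc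
  · generalize hac : f c = a at ha hffc
    have hac' : a < c := hLc a ha
    obtain ⟨l₀, l₂, rfl⟩ := List.append_of_mem ha
    have hf' := hf.of_append_cons_append hs hac
    have hlt : ∀ i ∈ l₀ ++ l₂, f i < c := fun i hi =>
      hLc _ <| (by simp : (l₀ ++ l₂).Sublist (l₀ ++ a :: l₂)).subset (hf' i hi).1
    have IH := ih _ (by simp) (hs.sublist (by simp)) hf' rfl
    have hT := forall_mem_rsPair_fst (p := (· < c)) hlt
    rw [IH] at hT
    rw [rsPair_append_arc hffc hac (List.pairwise_append.1 hs).1 hlt, IH,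
      rsStep_addArc_self hT hac', rbsTableau_append_singleton _ (hac ▸ hac'.le),
      rbsTableau_append_cons_of_lt _ _ (hffc ▸ hac'), hac]
  · replace hc : f c = c := List.mem_singleton.1 hc
    have hfL := hf.of_append_singleton hs hc
    have IH := ih L.length (by simp) (List.pairwise_append.1 hs).1 hfL rfl
    have hT := forall_mem_rsPair_fst (p := (· ≤ c)) fun i hi => (hLc _ (hfL i hi).1).le
    rw [IH] at hT
    rw [rsPair_append_singleton, IH, hc, rsStep_self_of_forall_le hT,
      rbsTableau_append_singleton _ hc.le, hc]

theorem RSpair_eq_foldl_rsStep (u : List ℕ) :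
    RSpair u = ((u.zipIdx.map Prod.swap).map fun p => (p.1 + 1, p.2)).foldl rsStep ([], []) := by
  simp only [RSpair, List.foldl_map]
  rfl

theorem fst_RSpair (u : List ℕ) : (RSpair u).1 = PRS u := by
  rw [RSpair_eq_foldl_rsStep, foldl_rsStep_fst, List.map_map, List.map_map]
  exact congrArg (List.foldl rsInsert []) (List.zipIdx_map_fst 0 u)

theorem RSpair_wordFn (w : ℕ → ℕ) (m : ℕ) :
    RSpair (wordFn w m) = rsPair (fun j => w (j - 1) + 1) (List.range' 1 m) := by
  have h : ((wordFn w m).zipIdx.map Prod.swap).map (fun p => (p.1 + 1, p.2)) =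
      (List.range' 1 m).map fun j => (j, w (j - 1) + 1) := by
    refine List.ext_getElem (by simp [wordFn]) fun i _ _ => ?_
    simp [wordFn, List.getElem_zipIdx, List.getElem_range', Nat.add_comm 1]
  rw [RSpair_eq_foldl_rsStep, rsPair, h]

theorem PrBSfn_eq_rbsTableau (w : ℕ → ℕ) (m : ℕ) :
    PrBSfn w m = rbsTableau (fun j => w (j - 1) + 1) (List.range' 1 m) := by
  simp [PrBSfn, invPairsFn, rbsTableau, List.range'_eq_map_range, List.filter_map,
    Function.comp_def, Nat.add_comm 1]

theorem permFn_lt {n : ℕ} (z : Equiv.Perm (Fin n)) {i : ℕ} (hi : i < n) : permFn z i < n := by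
  simp [permFn, hi]

theorem permFn_mul {n : ℕ} (y z : Equiv.Perm (Fin n)) (i : ℕ) :
    permFn (y * z) i = permFn y (permFn z i) := by
  by_cases hi : i < n <;> simp [permFn, hi]

theorem involutiveOn_act {n : ℕ} {z : Equiv.Perm (Fin n)} (hz : z * z = 1) :
    InvolutiveOn (act z) (List.range' 1 n) := by
  intro j hj
  rw [List.mem_range'_1] at hj
  have hlt := permFn_lt z (i := j - 1) (by omega)
  refine ⟨by rw [act, List.mem_range'_1]; omega, ?_⟩
  rw [act, act, Nat.add_sub_cancel, ← permFn_mul, hz]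
  simp [permFn]
  omega

/-- row Beissinger insertion computes the RS tableau of an involution. -/
theorem prbs_eq_prs (n : ℕ) (z : Equiv.Perm (Fin n)) (hz : z * z = 1) :
    PrBS z = PRS (wordOf z) ∧ PRS (wordOf z) = QRS (wordOf z) := by
  have h : rsPair (act z) (List.range' 1 n) =
      (rbsTableau (act z) (List.range' 1 n), rbsTableau (act z) (List.range' 1 n)) :=
    rsPair_eq_rbsTableau List.pairwise_lt_range' (involutiveOn_act hz)
  have hRS : RSpair (wordOf z) = rsPair (act z) (List.range' 1 n) := RSpair_wordFn _ _
  have hBS : PrBS z = rbsTableau (act z) (List.range' 1 n) := PrBSfn_eq_rbsTableau _ _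
  rw [← fst_RSpair, QRS, hRS, hBS, h]
  exact ⟨rfl, rfl⟩

end GelfandRSK
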